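/- Gaussian multiple-integral identity (Lemma 5.1 (II), case ρ = β = 0): fix an integer r ≥ 1 and a real number c > 0. For m ≥ 1 and w ∈ ℂ^m write Δ_m(w) = ∏_{1 ≤ i < j ≤ m} (w_i − w_j). Define Θ_r(0,0) := (1/2π)^r ∫_{ℝ^r} ∏_{α=1}^r e^{2(c+it_α)²} · Δ_r(c+it_1, …, c+it_r)² dt_1 ⋯ dt_r, and for u, v ∈ ℂ define Θ⁺_{r−1}(u,v) := (1/2π)^{r−1} ∫_{ℝ^{r−1}} ∏_{α=1}^{r−1} e^{2(c+it_α)²} (u − (c+it_α)) (v − (c+it_α)) · Δ_{r−1}(c+it_1, …, c+it_{r−1})² dt_1 ⋯ dt_{r−1} (with the empty integral equal to 1 when r = 1). Then for all u, v ∈ ℂ: r · Θ⁺_{r−1}(u,v) = 2π√2 · e^{−u² − v²} · K_r(−i√2 u, −i√2 v) · Θ_r(0,0), and all the integrals converge absolutely. -/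

import Mathlib

open MeasureTheory

/-- Physicists' Hermite polynomial `H_j`, defined via the Rodrigues formula
`H_j(z) = (-1)^j e^{z²} (d/dz)^j e^{-z²}` (its entire/polynomial extension to `ℂ`). -/
noncomputable def physHermite (j : ℕ) (z : ℂ) : ℂ :=
  (-1 : ℂ) ^ j * Complex.exp (z ^ 2) * iteratedDeriv j (fun w => Complex.exp (-w ^ 2)) z

/-- The GUE (Hermite / Christoffel–Darboux) kernel
`K_n(x,y) = (1/√π) Σ_{j<n} H_j(x) H_j(y) e^{-(x²+y²)/2} / (2^j j!)`,
extended to complex arguments. -/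
noncomputable def gueKernel (n : ℕ) (x y : ℂ) : ℂ :=
  (1 / (Real.sqrt Real.pi : ℂ)) * ∑ j ∈ Finset.range n,
    physHermite j x * physHermite j y * Complex.exp (-(x ^ 2 + y ^ 2) / 2) /
      ((2 : ℂ) ^ j * (j.factorial : ℂ))

/-- Vandermonde determinant `Δ_m(w) = ∏_{i<j} (w_i - w_j)`. -/
noncomputable def vdm (m : ℕ) (w : Fin m → ℂ) : ℂ :=
  ∏ i : Fin m, ∏ j : Fin m, if i < j then w i - w j else 1

/-- `Θ_r(0,0)`: the `r`-fold integral over the vertical line `{c+it}` of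
`∏_α e^{2 w_α²} Δ_r(w)²`, with `dw_α/(2πi) = dt_α/(2π)`. -/
noncomputable def theta00 (r : ℕ) (c : ℝ) : ℂ :=
  (1 / (2 * Real.pi) : ℂ) ^ r *
    ∫ t : Fin r → ℝ,
      (∏ α : Fin r, Complex.exp (2 * ((c : ℂ) + Complex.I * (t α : ℂ)) ^ 2)) *
        (vdm r fun α => (c : ℂ) + Complex.I * (t α : ℂ)) ^ 2

/-- `Θ⁺_m(u,v)`: the `m`-fold integral over the vertical line `{c+it}` of
`∏_α e^{2 w_α²} (u - w_α)(v - w_α) Δ_m(w)²`, with `dw_α/(2πi) = dt_α/(2π)`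
(the empty integral being `1` when `m = 0`). -/
noncomputable def thetaPlus (m : ℕ) (c : ℝ) (u v : ℂ) : ℂ :=
  (1 / (2 * Real.pi) : ℂ) ^ m *
    ∫ t : Fin m → ℝ,
      (∏ α : Fin m, Complex.exp (2 * ((c : ℂ) + Complex.I * (t α : ℂ)) ^ 2) *
          (u - ((c : ℂ) + Complex.I * (t α : ℂ))) * (v - ((c : ℂ) + Complex.I * (t α : ℂ)))) *
        (vdm m fun α => (c : ℂ) + Complex.I * (t α : ℂ)) ^ 2

section aux
open Polynomial Complex Finset


noncomputable def hp : ℕ → Polynomial ℂ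
  | 0 => 1
  | (j+1) => 2 * X * hp j - derivative (hp j)

lemma hp_zero : hp 0 = 1 := rfl
lemma hp_succ (j : ℕ) : hp (j+1) = 2 * X * hp j - derivative (hp j) := rfl

lemma two_eq_C : (2 : Polynomial ℂ) = C 2 := (map_ofNat C 2).symm

lemma hp_deriv_succ (j : ℕ) : derivative (hp (j+1)) = C (2*((j:ℂ)+1)) * hp j := by
  induction j with
  | zero =>
    show derivative (2 * X * hp 0 - derivative (hp 0)) = _
    simp [hp_zero, two_eq_C]
  | succ j ih =>
    have e1 : derivative (hp (j+1+1)) =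
        2*hp (j+1) + 2*X*derivative (hp (j+1)) - derivative (derivative (hp (j+1))) := by
      rw [hp_succ (j+1), derivative_sub, derivative_mul, derivative_mul]
      simp
    have e2 : derivative (derivative (hp (j+1))) = C (2*((j:ℂ)+1)) * derivative (hp j) := by
      rw [ih, derivative_mul, derivative_C, zero_mul, zero_add]
    have e4 : C (2*(((j:ℕ)+1:ℕ):ℂ)+2) = C (2*((j:ℂ)+1)) + C 2 := by
      rw [← C_add]; push_cast; ring_nf
    rw [e1, ih, derivative_mul, derivative_C, zero_mul, zero_add, hp_succ j]
    push_cast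
    rw [show C (2 * ((j:ℂ) + 1 + 1)) = C (2*((j:ℂ)+1)) + C 2 by rw [← C_add]; ring_nf]
    rw [two_eq_C]
    ring

lemma hp_deriv (j : ℕ) : derivative (hp j) = C (2*(j:ℂ)) * hp (j-1) := by
  cases j with
  | zero => simp [hp_zero]
  | succ j => rw [hp_deriv_succ j]; push_cast; ring_nf

lemma hp_natDegree_le (j : ℕ) : (hp j).natDegree ≤ j := by
  induction j with
  | zero => simp [hp_zero]
  | succ j ih =>
    rw [hp_succ]
    refine le_trans (natDegree_sub_le _ _) (max_le ?_ ?_)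
    · refine le_trans (natDegree_mul_le) ?_
      have : (2*X : Polynomial ℂ).natDegree ≤ 1 := by
        refine le_trans (natDegree_mul_le) ?_
        simp
      omega
    · have := natDegree_derivative_le (hp j)
      omega

lemma hp_coeff (j : ℕ) : (hp j).coeff j = 2^j := by
  induction j with
  | zero => simp [hp_zero]
  | succ j ih =>
    rw [hp_succ, coeff_sub, two_eq_C, mul_assoc, coeff_C_mul, coeff_X_mul, ih,
      coeff_eq_zero_of_natDegree_lt, sub_zero]
    · ring
    · have := natDegree_derivative_le (hp j)
      have := hp_natDegree_le j
      omega

lemma hp_natDegree (j : ℕ) : (hp j).natDegree = j := by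
  refine le_antisymm (hp_natDegree_le j) (le_natDegree_of_ne_zero ?_)
  rw [hp_coeff]
  exact pow_ne_zero j two_ne_zero

lemma hp_leadingCoeff (j : ℕ) : (hp j).leadingCoeff = 2^j := by
  rw [leadingCoeff, hp_natDegree, hp_coeff]

noncomputable def sC : ℂ := -(Complex.I * (Real.sqrt 2 : ℂ))

lemma sC_ne : sC ≠ 0 := by
  simp only [sC, neg_ne_zero, mul_ne_zero_iff]
  refine ⟨Complex.I_ne_zero, ?_⟩
  simpa using Real.sqrt_ne_zero'.mpr (by norm_num)

lemma twosC_ne : (2*sC : ℂ) ≠ 0 := mul_ne_zero two_ne_zero sC_ne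

noncomputable def Pc (j : ℕ) : Polynomial ℂ := (hp j).comp (C sC * X)

lemma Pc_eval (j : ℕ) (z : ℂ) : (Pc j).eval z = (hp j).eval (sC * z) := by
  simp [Pc]

lemma Pc_zero : Pc 0 = 1 := by simp [Pc, hp_zero]

lemma Pc_deriv (j : ℕ) : derivative (Pc j) = C (2*(j:ℂ)*sC) * Pc (j-1) := by
  rw [Pc, derivative_comp, hp_deriv, derivative_mul, derivative_C, derivative_X, C_mul_comp,
    zero_mul, zero_add, mul_one, ← Pc, ← mul_assoc, ← C_mul, mul_comm sC (2*(j:ℂ))]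

lemma Pc_rec (j : ℕ) : C (2*sC) * X * Pc j = Pc (j+1) + C (2*(j:ℂ)) * Pc (j-1) := by
  have : Pc (j+1) = 2 * (C sC * X) * Pc j - C (2*(j:ℂ)) * Pc (j-1) := by
    rw [Pc, hp_succ, sub_comp, mul_comp, mul_comp, X_comp, hp_deriv, C_mul_comp, two_eq_C, C_comp,
      ← Pc, ← Pc, ← two_eq_C]
  rw [this, C_mul, two_eq_C]
  ring

lemma Pc_natDegree (j : ℕ) : (Pc j).natDegree = j := by
  rw [Pc, natDegree_comp, hp_natDegree, natDegree_C_mul_X _ sC_ne, mul_one]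

lemma Pc_leadingCoeff (j : ℕ) : (Pc j).leadingCoeff = (2*sC)^j := by
  rw [Pc, leadingCoeff_comp (by rw [natDegree_C_mul_X _ sC_ne]; norm_num),
    hp_leadingCoeff, leadingCoeff_C_mul_X, hp_natDegree, mul_pow]

noncomputable def qp (j : ℕ) : Polynomial ℂ := C (((2*sC)^j)⁻¹) * Pc j

lemma qp_natDegree (j : ℕ) : (qp j).natDegree = j := by
  rw [qp, natDegree_C_mul (inv_ne_zero (pow_ne_zero _ twosC_ne)), Pc_natDegree]

lemma qp_monic (j : ℕ) : (qp j).Monic := by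
  have : (qp j).leadingCoeff = 1 := by
    rw [qp, leadingCoeff_mul, leadingCoeff_C, Pc_leadingCoeff,
      inv_mul_cancel₀ (pow_ne_zero _ twosC_ne)]
  exact this

lemma qp_eval (j : ℕ) (z : ℂ) : (qp j).eval z = ((2*sC)^j)⁻¹ * (hp j).eval (sC * z) := by
  rw [qp, eval_mul, eval_C, Pc_eval]

-- ### 1D analysis
lemma poly_norm_le (p : Polynomial ℂ) (z : ℂ) :
    ‖p.eval z‖ ≤ (∑ k ∈ range (p.natDegree+1), ‖p.coeff k‖) * (1+‖z‖)^(p.natDegree) := by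
  rw [eval_eq_sum_range]
  refine le_trans (norm_sum_le _ _) ?_
  rw [sum_mul]
  refine Finset.sum_le_sum fun k hk => ?_
  rw [norm_mul, norm_pow]
  refine mul_le_mul_of_nonneg_left ?_ (norm_nonneg _)
  calc ‖z‖^k ≤ (1+‖z‖)^k := by
        refine pow_le_pow_left₀ (norm_nonneg _) (by linarith [norm_nonneg z]) _
    _ ≤ (1+‖z‖)^(p.natDegree) := by
        refine pow_le_pow_right₀ (by linarith [norm_nonneg z]) ?_
        exact Nat.lt_succ_iff.mp (mem_range.mp hk)

lemma integrable_abs_pow_gauss (j : ℕ) : Integrable (fun t : ℝ => |t|^j * Real.exp (-2*t^2)) := by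
  have h := (integrable_rpow_mul_exp_neg_mul_sq (b := 2) (by norm_num)
    (s := j) (lt_of_lt_of_le neg_one_lt_zero (Nat.cast_nonneg j))).abs
  refine h.congr ?_
  refine Filter.Eventually.of_forall fun t => ?_
  show |t ^ (j:ℝ) * Real.exp (-2*t^2)| = _
  rw [Real.rpow_natCast, abs_mul, _root_.abs_pow, abs_of_pos (Real.exp_pos _)]

lemma integrable_aux (n : ℕ) (a : ℝ) :
    Integrable (fun t : ℝ => (a + |t|)^n * Real.exp (-2*t^2)) := by
  have h : ∀ t : ℝ, (a + |t|)^n * Real.exp (-2*t^2)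
      = ∑ j ∈ range (n+1), (a^j * n.choose j) * (|t|^(n-j) * Real.exp (-2*t^2)) := by
    intro t
    rw [add_pow, sum_mul]
    congr 1; ext j; ring
  simp_rw [h]
  exact integrable_finset_sum _ fun j _ => (integrable_abs_pow_gauss (n-j)).const_mul _

lemma re_two_sq (c t : ℝ) : (2*((c:ℂ)+Complex.I*t)^2).re = 2*c^2 - 2*t^2 := by
  simp [pow_two, Complex.mul_re, Complex.add_re, Complex.mul_im, Complex.add_im]
  ring

lemma cont_pg (c : ℝ) (p : Polynomial ℂ) :
    Continuous fun t : ℝ => p.eval ((c:ℂ) + Complex.I*t) * Complex.exp (2*((c:ℂ)+Complex.I*t)^2) := by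
  have hw : Continuous fun t : ℝ => (c:ℂ) + Complex.I*t := by continuity
  exact (p.continuous.comp hw).mul (Complex.continuous_exp.comp (by continuity))

lemma integrable_pg (c : ℝ) (p : Polynomial ℂ) :
    Integrable fun t : ℝ => p.eval ((c:ℂ) + Complex.I*t) * Complex.exp (2*((c:ℂ)+Complex.I*t)^2) := by
  set Cp := ∑ k ∈ range (p.natDegree+1), ‖p.coeff k‖ with hCp
  have hCp0 : 0 ≤ Cp := Finset.sum_nonneg fun k _ => norm_nonneg _
  refine Integrable.mono' (((integrable_aux p.natDegree (1+|c|)).const_mul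
    (Cp * Real.exp (2*c^2)))) (cont_pg c p).aestronglyMeasurable ?_
  refine Filter.Eventually.of_forall fun t => ?_
  rw [norm_mul, Complex.norm_exp, re_two_sq]
  have h1 : ‖p.eval ((c:ℂ)+Complex.I*t)‖ ≤ Cp * (1+|c|+|t|)^(p.natDegree) := by
    refine le_trans (poly_norm_le p _) ?_
    refine mul_le_mul_of_nonneg_left ?_ hCp0
    refine pow_le_pow_left₀ (by positivity) ?_ _
    have : ‖(c:ℂ)+Complex.I*t‖ ≤ |c| + |t| := by
      refine le_trans (norm_add_le _ _) ?_
      simp [Complex.norm_real]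
    linarith
  have h2 : Real.exp (2*c^2-2*t^2) = Real.exp (2*c^2) * Real.exp (-2*t^2) := by
    rw [← Real.exp_add]; ring_nf
  rw [h2]
  calc ‖p.eval ((c:ℂ)+Complex.I*t)‖ * (Real.exp (2*c^2) * Real.exp (-2*t^2))
      ≤ (Cp * (1+|c|+|t|)^(p.natDegree)) * (Real.exp (2*c^2) * Real.exp (-2*t^2)) := by
        refine mul_le_mul_of_nonneg_right h1 (by positivity)
    _ = Cp * Real.exp (2*c^2) * ((1+|c| + |t|)^(p.natDegree) * Real.exp (-2*t^2)) := by ring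

noncomputable def mom (c : ℝ) (p : Polynomial ℂ) : ℂ :=
  ∫ t : ℝ, p.eval ((c:ℂ) + Complex.I*t) * Complex.exp (2*((c:ℂ)+Complex.I*t)^2)

noncomputable def Sc : ℝ := Real.sqrt (Real.pi/2)

lemma Sc_pos : 0 < Sc := Real.sqrt_pos.mpr (by positivity)

lemma mom_one (c : ℝ) : mom c 1 = (Sc : ℂ) := by
  have h : ∀ t : ℝ, (1 : Polynomial ℂ).eval ((c:ℂ)+Complex.I*t) *
      Complex.exp (2*((c:ℂ)+Complex.I*t)^2)
      = Complex.exp ((-2:ℂ)*(t:ℝ)^2 + (4*Complex.I*c)*(t:ℝ) + 2*(c:ℂ)^2) := by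
    intro t
    rw [eval_one, one_mul]
    congr 1
    push_cast
    ring_nf
    rw [Complex.I_sq]
    ring
  rw [mom]
  simp_rw [h]
  rw [integral_cexp_quadratic (by norm_num : (-2:ℂ).re < 0)]
  have h2 : (2*(c:ℂ)^2 - (4*Complex.I*(c:ℂ))^2/(4*(-2:ℂ))) = 0 := by
    have : (Complex.I)^2 = -1 := Complex.I_sq
    field_simp
    ring_nf
    rw [Complex.I_sq]
    ring
  rw [h2, Complex.exp_zero, mul_one]
  have h3 : (↑Real.pi / -(-2:ℂ)) = ((Real.pi/2 : ℝ) : ℂ) := by push_cast; ring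
  rw [h3, show ((1:ℂ)/2) = ((1/2 : ℝ) : ℂ) by norm_num,
    ← Complex.ofReal_cpow (by positivity) (1/2 : ℝ)]
  rw [Sc, Real.sqrt_eq_rpow]

lemma hasDerivAt_pg (c : ℝ) (p : Polynomial ℂ) (t : ℝ) :
    HasDerivAt (fun t : ℝ => p.eval ((c:ℂ)+Complex.I*t) * Complex.exp (2*((c:ℂ)+Complex.I*t)^2))
      (Complex.I * ((derivative p + 4*(X*p)).eval ((c:ℂ)+Complex.I*t) *
        Complex.exp (2*((c:ℂ)+Complex.I*t)^2))) t := by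
  set z := (c:ℂ) + Complex.I*t with hz
  have hw : HasDerivAt (fun s : ℝ => (c:ℂ) + Complex.I*s) Complex.I t := by
    have h0 : HasDerivAt (fun s : ℝ => (s:ℂ)) 1 t := by
      exact (hasDerivAt_id t).ofReal_comp.congr_deriv (by simp)
    simpa using (h0.const_mul Complex.I).const_add (c:ℂ)
  have hpe : HasDerivAt (fun s : ℝ => p.eval ((c:ℂ)+Complex.I*s))
      (Complex.I • (derivative p).eval z) t :=
    by have := HasDerivAt.scomp t (p.hasDerivAt z) hw; exact this
  have hsq : HasDerivAt (fun s : ℝ => 2*((c:ℂ)+Complex.I*s)^2)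
      (2*(Complex.I * z + z * Complex.I)) t := by
    have := (hw.mul hw).const_mul (2:ℂ)
    simpa [pow_two] using this
  have hexp : HasDerivAt (fun s : ℝ => Complex.exp (2*((c:ℂ)+Complex.I*s)^2))
      (Complex.exp (2*z^2) * (2*(Complex.I * z + z * Complex.I))) t := hsq.cexp
  have := hpe.mul hexp
  refine this.congr_deriv ?_
  simp only [smul_eq_mul, eval_add, eval_mul, eval_X, eval_ofNat]
  ring

lemma mom_add (c : ℝ) (p q : Polynomial ℂ) : mom c (p + q) = mom c p + mom c q := by
  rw [mom, mom, mom]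
  simp_rw [eval_add, add_mul]
  exact integral_add (integrable_pg c p) (integrable_pg c q)

lemma mom_C_mul (c : ℝ) (a : ℂ) (p : Polynomial ℂ) : mom c (C a * p) = a * mom c p := by
  rw [mom, mom]
  simp_rw [eval_mul, eval_C, mul_assoc]
  exact integral_const_mul a _

lemma mom_ibp (c : ℝ) (p : Polynomial ℂ) :
    mom c (derivative p) + 4 * mom c (X*p) = 0 := by
  have h0 : (∫ t : ℝ, Complex.I * ((derivative p + 4*(X*p)).eval ((c:ℂ)+Complex.I*t) *
      Complex.exp (2*((c:ℂ)+Complex.I*t)^2))) = 0 :=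
    integral_eq_zero_of_hasDerivAt_of_integrable (hasDerivAt_pg c p)
      ((integrable_pg c _).const_mul Complex.I) (integrable_pg c p)
  rw [integral_const_mul] at h0
  have h1 : mom c (derivative p + 4*(X*p)) = 0 := by
    rcases mul_eq_zero.mp h0 with h | h
    · exact absurd h Complex.I_ne_zero
    · exact h
  rw [mom_add, show (4 : Polynomial ℂ) * (X*p) = C 4 * (X*p) by rw [map_ofNat], mom_C_mul] at h1
  exact h1

noncomputable def Em (c : ℝ) (j k : ℕ) : ℂ := mom c (Pc j * Pc k)

lemma Em_symm (c : ℝ) (j k : ℕ) : Em c j k = Em c k j := by rw [Em, Em, mul_comm]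

lemma sC_sq : sC^2 = -2 := by
  have h : ((Real.sqrt 2 : ℝ):ℂ)^2 = 2 := by
    rw [← Complex.ofReal_pow, Real.sq_sqrt (by norm_num : (2:ℝ) ≥ 0).le]
    norm_num
  rw [sC, neg_pow, mul_pow, Complex.I_sq, h]
  ring

lemma Em_rec (c : ℝ) (j k : ℕ) : Em c (j+1) k = 2*(k:ℂ) * Em c j (k-1) := by
  have h0 := mom_ibp c (Pc j * Pc k)
  have hd : derivative (Pc j * Pc k)
      = C (2*(j:ℂ)*sC) * (Pc (j-1) * Pc k) + C (2*(k:ℂ)*sC) * (Pc j * Pc (k-1)) := by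
    rw [derivative_mul, Pc_deriv, Pc_deriv]; ring
  have hx' : C (2*sC) * (X * (Pc j * Pc k))
      = Pc (j+1) * Pc k + C (2*(j:ℂ)) * (Pc (j-1) * Pc k) := by
    linear_combination Pc k * Pc_rec j
  have e1 : mom c (derivative (Pc j * Pc k))
      = (2*(j:ℂ)*sC) * Em c (j-1) k + (2*(k:ℂ)*sC) * Em c j (k-1) := by
    rw [hd, mom_add, mom_C_mul, mom_C_mul]; rfl
  have e2 : (2*sC) * mom c (X * (Pc j * Pc k))
      = Em c (j+1) k + (2*(j:ℂ)) * Em c (j-1) k := by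
    rw [← mom_C_mul, hx', mom_add, mom_C_mul]; rfl
  have h2 : (2*sC)*((2*(j:ℂ)*sC) * Em c (j-1) k + (2*(k:ℂ)*sC) * Em c j (k-1))
      + 4*(Em c (j+1) k + (2*(j:ℂ)) * Em c (j-1) k) = 0 := by
    rw [← e1, ← e2]
    linear_combination (2*sC) * h0
  linear_combination ((1/4):ℂ) * h2
    + (-((j:ℂ) * Em c (j-1) k + (k:ℂ) * Em c j (k-1))) * sC_sq

lemma Em_diag (c : ℝ) (j k : ℕ) :
    Em c j k = if j = k then 2^j * (j.factorial:ℂ) * (Sc:ℂ) else 0 := by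
  induction j generalizing k with
  | zero =>
    cases k with
    | zero => simp [Em, Pc_zero, mom_one]
    | succ k => rw [Em_symm, Em_rec]; simp
  | succ j ih =>
    cases k with
    | zero => rw [Em_rec]; simp
    | succ k =>
      rw [Em_rec, Nat.succ_sub_one, ih k]
      by_cases h : j = k
      · subst h
        simp only [if_pos rfl, Nat.factorial_succ]
        push_cast
        ring
      · simp only [if_neg h, if_neg (fun h' => h (Nat.succ_injective h')), mul_zero]

noncomputable def hval (j : ℕ) : ℂ :=
  ((2*sC)^j)⁻¹ * ((2*sC)^j)⁻¹ * (2^j * (j.factorial:ℂ) * (Sc:ℂ))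

lemma hval_ne (j : ℕ) : hval j ≠ 0 := by
  have h1 : ((2*sC)^j)⁻¹ ≠ 0 := inv_ne_zero (pow_ne_zero _ twosC_ne)
  have h2 : (2^j * (j.factorial:ℂ) * (Sc:ℂ)) ≠ 0 := by
    refine mul_ne_zero (mul_ne_zero (pow_ne_zero _ two_ne_zero) ?_) ?_
    · exact_mod_cast Nat.factorial_ne_zero j
    · exact_mod_cast ne_of_gt Sc_pos
  exact mul_ne_zero (mul_ne_zero h1 h1) h2

lemma mom_qp (c : ℝ) (j k : ℕ) :
    mom c (qp j * qp k) = if j = k then hval j else 0 := by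
  rw [qp, qp, show (C (((2*sC)^j)⁻¹) * Pc j) * (C (((2*sC)^k)⁻¹) * Pc k)
    = C (((2*sC)^j)⁻¹) * (C (((2*sC)^k)⁻¹) * (Pc j * Pc k)) from by ring,
    mom_C_mul, mom_C_mul, ← Em, Em_diag]
  by_cases h : j = k
  · subst h; rw [if_pos rfl, if_pos rfl, hval]; ring
  · simp [h]

-- ### Vandermonde manipulations
noncomputable def epsC {n : ℕ} (σ : Equiv.Perm (Fin n)) : ℂ := ((Equiv.Perm.sign σ : ℤ) : ℂ)

lemma epsC_mul_self {n : ℕ} (σ : Equiv.Perm (Fin n)) : epsC σ * epsC σ = 1 := by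
  rw [epsC, ← Int.cast_mul, ← Units.val_mul, Int.units_mul_self, Units.val_one, Int.cast_one]

lemma vdm_eq (n : ℕ) (w : Fin n → ℂ) :
    vdm n w = (-1:ℂ)^(∑ i : Fin n, (Finset.Ioi i).card) * (Matrix.vandermonde w).det := by
  rw [Matrix.det_vandermonde, vdm, ← Finset.prod_pow_eq_pow_sum, ← Finset.prod_mul_distrib]
  refine Finset.prod_congr rfl fun i _ => ?_
  rw [← Finset.filter_lt_eq_Ioi (a := i)]
  rw [← Finset.prod_filter (fun j => i < j) (fun j => w i - w j)]
  have h : ∀ j : Fin n, w i - w j = (-1) * (w j - w i) := fun j => by ring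
  calc (∏ j ∈ ({x | i < x} : Finset (Fin n)), (w i - w j))
      = ∏ j ∈ ({x | i < x} : Finset (Fin n)), (-1) * (w j - w i) := by
        exact Finset.prod_congr rfl fun j _ => h j
    _ = (-1:ℂ)^({x | i < x} : Finset (Fin n)).card * ∏ j ∈ ({x | i < x} : Finset (Fin n)), (w j - w i) := by
        rw [Finset.prod_mul_distrib, Finset.prod_const]

lemma vdm_mul (n : ℕ) (v v' : Fin n → ℂ) :
    vdm n v * vdm n v' = (Matrix.vandermonde v).det * (Matrix.vandermonde v').det := by
  rw [vdm_eq, vdm_eq]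
  set E := (-1:ℂ)^(∑ i : Fin n, (Finset.Ioi i).card) with hE
  have hEE : E * E = 1 := by
    rw [hE, ← pow_add, ← two_mul, pow_mul]
    norm_num
  calc E * (Matrix.vandermonde v).det * (E * (Matrix.vandermonde v').det)
      = (E * E) * ((Matrix.vandermonde v).det * (Matrix.vandermonde v').det) := by ring
    _ = _ := by rw [hEE, one_mul]

lemma vdm_cons (n : ℕ) (u : ℂ) (w : Fin n → ℂ) :
    vdm (n+1) (Fin.cons u w) = (∏ α : Fin n, (u - w α)) * vdm n w := by
  rw [vdm, vdm, Fin.prod_univ_succ]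
  congr 1
  · rw [Fin.prod_univ_succ]
    simp
  · refine Finset.prod_congr rfl fun i _ => ?_
    rw [Fin.prod_univ_succ]
    simp [Fin.succ_lt_succ_iff]

lemma det_vand_expand (n : ℕ) (v : Fin n → ℂ) :
    (Matrix.vandermonde v).det = ∑ σ : Equiv.Perm (Fin n), epsC σ * ∏ i, (qp (σ i)).eval (v i) := by
  rw [Matrix.det_eval_matrixOfPolynomials_eq_det_vandermonde v (fun i => qp i)
    (fun i => qp_natDegree i) (fun i => qp_monic i), ← Matrix.det_transpose, Matrix.det_apply']
  rfl

-- ### multivariate: theta00 case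
lemma theta_integrand_eq (c : ℝ) (n : ℕ) (t : Fin n → ℝ) :
    (∏ α : Fin n, Complex.exp (2 * ((c:ℂ) + Complex.I * (t α : ℂ))^2)) *
      (vdm n fun α => (c:ℂ) + Complex.I * (t α : ℂ))^2
    = ∑ σ : Equiv.Perm (Fin n), ∑ τ : Equiv.Perm (Fin n), (epsC σ * epsC τ) *
        ∏ α : Fin n, ((qp (σ α) * qp (τ α)).eval ((c:ℂ) + Complex.I*(t α : ℂ)) *
          Complex.exp (2 * ((c:ℂ) + Complex.I * (t α : ℂ))^2)) := by
  rw [pow_two, vdm_mul, det_vand_expand, Finset.sum_mul_sum, Finset.mul_sum]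
  refine Finset.sum_congr rfl fun σ _ => ?_
  rw [Finset.mul_sum]
  refine Finset.sum_congr rfl fun τ _ => ?_
  simp_rw [eval_mul, Finset.prod_mul_distrib]
  ring

lemma theta_summand_integrable (c : ℝ) (n : ℕ) (σ τ : Equiv.Perm (Fin n)) :
    Integrable (fun t : Fin n → ℝ => (epsC σ * epsC τ) *
      ∏ α : Fin n, ((qp (σ α) * qp (τ α)).eval ((c:ℂ) + Complex.I*(t α : ℂ)) *
        Complex.exp (2 * ((c:ℂ) + Complex.I * (t α : ℂ))^2))) := by
  exact (Integrable.fin_nat_prod (f := fun α (x : ℝ) =>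
    (qp (σ α) * qp (τ α)).eval ((c:ℂ) + Complex.I*(x : ℂ)) *
      Complex.exp (2 * ((c:ℂ) + Complex.I * (x : ℂ))^2))
    (fun α => integrable_pg c _)).const_mul _

lemma theta_integrable (c : ℝ) (n : ℕ) :
    Integrable (fun t : Fin n → ℝ =>
      (∏ α : Fin n, Complex.exp (2 * ((c:ℂ) + Complex.I * (t α : ℂ))^2)) *
        (vdm n fun α => (c:ℂ) + Complex.I * (t α : ℂ))^2) := by
  have h : (fun t : Fin n → ℝ =>
      (∏ α : Fin n, Complex.exp (2 * ((c:ℂ) + Complex.I * (t α : ℂ))^2)) *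
        (vdm n fun α => (c:ℂ) + Complex.I * (t α : ℂ))^2)
      = fun t => ∑ σ : Equiv.Perm (Fin n), ∑ τ : Equiv.Perm (Fin n), (epsC σ * epsC τ) *
        ∏ α : Fin n, ((qp (σ α) * qp (τ α)).eval ((c:ℂ) + Complex.I*(t α : ℂ)) *
          Complex.exp (2 * ((c:ℂ) + Complex.I * (t α : ℂ))^2)) :=
    funext fun t => theta_integrand_eq c n t
  rw [h]
  exact integrable_finset_sum _ fun σ _ => integrable_finset_sum _ fun τ _ =>
    theta_summand_integrable c n σ τ

lemma theta_integral (c : ℝ) (n : ℕ) :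
    (∫ t : Fin n → ℝ,
      (∏ α : Fin n, Complex.exp (2 * ((c:ℂ) + Complex.I * (t α : ℂ))^2)) *
        (vdm n fun α => (c:ℂ) + Complex.I * (t α : ℂ))^2)
    = (n.factorial : ℂ) * ∏ j : Fin n, hval (j : ℕ) := by
  simp_rw [theta_integrand_eq c n]
  rw [integral_finset_sum _ fun σ _ => integrable_finset_sum _ fun τ _ =>
    theta_summand_integrable c n σ τ]
  have hστ : ∀ σ τ : Equiv.Perm (Fin n),
      (∫ t : Fin n → ℝ, (epsC σ * epsC τ) *
        ∏ α : Fin n, ((qp (σ α) * qp (τ α)).eval ((c:ℂ) + Complex.I*(t α : ℂ)) *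
          Complex.exp (2 * ((c:ℂ) + Complex.I * (t α : ℂ))^2)))
      = (epsC σ * epsC τ) * ∏ α : Fin n,
          (if (σ α : ℕ) = (τ α : ℕ) then hval (σ α : ℕ) else 0) := by
    intro σ τ
    rw [integral_const_mul, MeasureTheory.integral_fintype_prod_volume_eq_prod (ι := Fin n)
      (f := fun α (x : ℝ) => (qp (σ α) * qp (τ α)).eval ((c:ℂ) + Complex.I*(x : ℂ)) *
        Complex.exp (2 * ((c:ℂ) + Complex.I * (x : ℂ))^2))]
    congr 1
    exact Finset.prod_congr rfl fun α _ => mom_qp c (σ α) (τ α)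
  rw [Finset.sum_congr rfl fun σ _ => integral_finset_sum _ fun τ _ =>
    theta_summand_integrable c n σ τ]
  rw [Finset.sum_congr rfl fun σ _ => Finset.sum_congr rfl fun τ _ => hστ σ τ]
  have hdiag : ∀ σ : Equiv.Perm (Fin n),
      (∑ τ : Equiv.Perm (Fin n), (epsC σ * epsC τ) * ∏ α : Fin n,
        (if (σ α : ℕ) = (τ α : ℕ) then hval (σ α : ℕ) else 0))
      = ∏ j : Fin n, hval (j : ℕ) := by
    intro σ
    rw [Finset.sum_eq_single σ]
    · rw [epsC_mul_self]
      simp only [if_pos rfl, one_mul]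
      exact Equiv.prod_comp σ (fun i : Fin n => hval (i : ℕ))
    · intro τ _ hτ
      have : ∃ α : Fin n, σ α ≠ τ α := by
        by_contra hcon
        push_neg at hcon
        exact hτ ((Equiv.ext hcon).symm)
      obtain ⟨α, hα⟩ := this
      refine mul_eq_zero_of_right _ (Finset.prod_eq_zero (Finset.mem_univ α) ?_)
      rw [if_neg (fun h => hα (Fin.ext h))]
    · intro h; exact absurd (Finset.mem_univ σ) h
  rw [Finset.sum_congr rfl fun σ _ => hdiag σ, Finset.sum_const, Finset.card_univ,
    Fintype.card_perm, Fintype.card_fin, nsmul_eq_mul]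

lemma plus_integrand_eq (c : ℝ) (n : ℕ) (u v : ℂ) (t : Fin n → ℝ) :
    (∏ α : Fin n, Complex.exp (2 * ((c:ℂ) + Complex.I * (t α : ℂ))^2) *
        (u - ((c:ℂ) + Complex.I * (t α : ℂ))) * (v - ((c:ℂ) + Complex.I * (t α : ℂ)))) *
      (vdm n fun α => (c:ℂ) + Complex.I * (t α : ℂ))^2
    = ∑ σ : Equiv.Perm (Fin (n+1)), ∑ τ : Equiv.Perm (Fin (n+1)), ((epsC σ * epsC τ) *
        ((qp (σ 0 : ℕ)).eval u * (qp (τ 0 : ℕ)).eval v)) *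
        ∏ α : Fin n, ((qp ((σ α.succ : Fin (n+1)) : ℕ) * qp ((τ α.succ : Fin (n+1)) : ℕ)).eval
            ((c:ℂ) + Complex.I*(t α : ℂ)) *
          Complex.exp (2 * ((c:ℂ) + Complex.I * (t α : ℂ))^2)) := by
  have h1 : (∏ α : Fin n, Complex.exp (2 * ((c:ℂ) + Complex.I * (t α : ℂ))^2) *
        (u - ((c:ℂ) + Complex.I * (t α : ℂ))) * (v - ((c:ℂ) + Complex.I * (t α : ℂ)))) *
      (vdm n fun α => (c:ℂ) + Complex.I * (t α : ℂ))^2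
      = (∏ α : Fin n, Complex.exp (2 * ((c:ℂ) + Complex.I * (t α : ℂ))^2)) *
        (vdm (n+1) (Fin.cons u (fun α => (c:ℂ) + Complex.I * (t α : ℂ))) *
         vdm (n+1) (Fin.cons v (fun α => (c:ℂ) + Complex.I * (t α : ℂ)))) := by
    rw [vdm_cons, vdm_cons, pow_two]
    simp_rw [Finset.prod_mul_distrib]
    ring
  rw [h1, vdm_mul, det_vand_expand, det_vand_expand, Finset.sum_mul_sum, Finset.mul_sum]
  refine Finset.sum_congr rfl fun σ _ => ?_
  rw [Finset.mul_sum]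
  refine Finset.sum_congr rfl fun τ _ => ?_
  simp_rw [Fin.prod_univ_succ, Fin.cons_zero, Fin.cons_succ, eval_mul, Finset.prod_mul_distrib]
  ring

lemma plus_summand_integrable (c : ℝ) (n : ℕ) (u v : ℂ) (σ τ : Equiv.Perm (Fin (n+1))) :
    Integrable (fun t : Fin n → ℝ => ((epsC σ * epsC τ) *
        ((qp (σ 0 : ℕ)).eval u * (qp (τ 0 : ℕ)).eval v)) *
        ∏ α : Fin n, ((qp ((σ α.succ : Fin (n+1)) : ℕ) * qp ((τ α.succ : Fin (n+1)) : ℕ)).eval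
            ((c:ℂ) + Complex.I*(t α : ℂ)) *
          Complex.exp (2 * ((c:ℂ) + Complex.I * (t α : ℂ))^2))) :=
  (Integrable.fin_nat_prod (f := fun α (x : ℝ) =>
    (qp ((σ α.succ : Fin (n+1)) : ℕ) * qp ((τ α.succ : Fin (n+1)) : ℕ)).eval
      ((c:ℂ) + Complex.I*(x : ℂ)) * Complex.exp (2 * ((c:ℂ) + Complex.I * (x : ℂ))^2))
    (fun α => integrable_pg c _)).const_mul _

lemma plus_integrable (c : ℝ) (n : ℕ) (u v : ℂ) :
    Integrable (fun t : Fin n → ℝ =>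
      (∏ α : Fin n, Complex.exp (2 * ((c:ℂ) + Complex.I * (t α : ℂ))^2) *
          (u - ((c:ℂ) + Complex.I * (t α : ℂ))) * (v - ((c:ℂ) + Complex.I * (t α : ℂ)))) *
        (vdm n fun α => (c:ℂ) + Complex.I * (t α : ℂ))^2) := by
  have h := funext fun t => plus_integrand_eq c n u v t
  rw [h]
  exact integrable_finset_sum _ fun σ _ => integrable_finset_sum _ fun τ _ =>
    plus_summand_integrable c n u v σ τ

lemma succ_eq_of_ne (n : ℕ) (σ τ : Equiv.Perm (Fin (n+1)))
    (hcon : ∀ α : Fin n, σ α.succ = τ α.succ) : σ = τ := by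
  have h0 : σ 0 = τ 0 := by
    by_contra h0
    obtain ⟨y, hy⟩ := τ.surjective (σ 0)
    have hy0 : y ≠ 0 := by
      intro h; rw [h] at hy; exact h0 hy.symm
    obtain ⟨α, rfl⟩ := Fin.eq_succ_of_ne_zero hy0
    have : σ α.succ = σ 0 := by rw [hcon α, hy]
    exact Fin.succ_ne_zero α (σ.injective this)
  refine Equiv.ext fun x => ?_
  refine Fin.cases h0 (fun α => hcon α) x

lemma plus_integral (c : ℝ) (n : ℕ) (u v : ℂ) :
    (∫ t : Fin n → ℝ,
      (∏ α : Fin n, Complex.exp (2 * ((c:ℂ) + Complex.I * (t α : ℂ))^2) *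
          (u - ((c:ℂ) + Complex.I * (t α : ℂ))) * (v - ((c:ℂ) + Complex.I * (t α : ℂ)))) *
        (vdm n fun α => (c:ℂ) + Complex.I * (t α : ℂ))^2)
    = (n.factorial : ℂ) * ∑ k : Fin (n+1), (qp (k:ℕ)).eval u * (qp (k:ℕ)).eval v *
        ((∏ j : Fin (n+1), hval (j:ℕ)) / hval (k:ℕ)) := by
  simp_rw [plus_integrand_eq c n u v]
  rw [integral_finset_sum _ fun σ _ => integrable_finset_sum _ fun τ _ =>
    plus_summand_integrable c n u v σ τ]
  rw [Finset.sum_congr rfl fun σ _ => integral_finset_sum _ fun τ _ =>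
    plus_summand_integrable c n u v σ τ]
  have hστ : ∀ σ τ : Equiv.Perm (Fin (n+1)),
      (∫ t : Fin n → ℝ, ((epsC σ * epsC τ) *
        ((qp (σ 0 : ℕ)).eval u * (qp (τ 0 : ℕ)).eval v)) *
        ∏ α : Fin n, ((qp ((σ α.succ : Fin (n+1)) : ℕ) * qp ((τ α.succ : Fin (n+1)) : ℕ)).eval
            ((c:ℂ) + Complex.I*(t α : ℂ)) *
          Complex.exp (2 * ((c:ℂ) + Complex.I * (t α : ℂ))^2)))
      = ((epsC σ * epsC τ) * ((qp (σ 0 : ℕ)).eval u * (qp (τ 0 : ℕ)).eval v)) *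
          ∏ α : Fin n, (if ((σ α.succ : Fin (n+1)) : ℕ) = ((τ α.succ : Fin (n+1)) : ℕ)
            then hval ((σ α.succ : Fin (n+1)) : ℕ) else 0) := by
    intro σ τ
    rw [integral_const_mul, MeasureTheory.integral_fintype_prod_volume_eq_prod (ι := Fin n)
      (f := fun α (x : ℝ) =>
        (qp ((σ α.succ : Fin (n+1)) : ℕ) * qp ((τ α.succ : Fin (n+1)) : ℕ)).eval
          ((c:ℂ) + Complex.I*(x : ℂ)) * Complex.exp (2 * ((c:ℂ) + Complex.I * (x : ℂ))^2))]
    congr 1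
    exact Finset.prod_congr rfl fun α _ => mom_qp c _ _
  rw [Finset.sum_congr rfl fun σ _ => Finset.sum_congr rfl fun τ _ => hστ σ τ]
  have hdiag : ∀ σ : Equiv.Perm (Fin (n+1)),
      (∑ τ : Equiv.Perm (Fin (n+1)), ((epsC σ * epsC τ) *
        ((qp (σ 0 : ℕ)).eval u * (qp (τ 0 : ℕ)).eval v)) *
          ∏ α : Fin n, (if ((σ α.succ : Fin (n+1)) : ℕ) = ((τ α.succ : Fin (n+1)) : ℕ)
            then hval ((σ α.succ : Fin (n+1)) : ℕ) else 0))
      = (qp ((σ 0 : Fin (n+1)) : ℕ)).eval u * (qp ((σ 0 : Fin (n+1)) : ℕ)).eval v *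
          ((∏ j : Fin (n+1), hval (j:ℕ)) / hval ((σ 0 : Fin (n+1)) : ℕ)) := by
    intro σ
    rw [Finset.sum_eq_single σ]
    · have hprod : hval ((σ 0 : Fin (n+1)) : ℕ) *
          ∏ α : Fin n, hval ((σ α.succ : Fin (n+1)) : ℕ) = ∏ j : Fin (n+1), hval (j:ℕ) :=
        (Fin.prod_univ_succ (fun i : Fin (n+1) => hval ((σ i : Fin (n+1)) : ℕ))).symm.trans
          (Equiv.prod_comp σ (fun i : Fin (n+1) => hval (i : ℕ)))
      have hpp : (∏ α : Fin n, hval ((σ α.succ : Fin (n+1)) : ℕ))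
          = (∏ j : Fin (n+1), hval (j:ℕ)) / hval ((σ 0 : Fin (n+1)) : ℕ) := by
        rw [eq_div_iff (hval_ne _)]
        linear_combination hprod
      rw [epsC_mul_self]
      simp only [eq_self_iff_true, if_true, ite_true, one_mul]
      rw [hpp]
    · intro τ _ hτ
      have : ∃ α : Fin n, σ α.succ ≠ τ α.succ := by
        by_contra hcon
        push_neg at hcon
        exact hτ ((succ_eq_of_ne n σ τ hcon).symm)
      obtain ⟨α, hα⟩ := this
      refine mul_eq_zero_of_right _ (Finset.prod_eq_zero (Finset.mem_univ α) ?_)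
      rw [if_neg (fun h => hα (Fin.ext h))]
    · intro h; exact absurd (Finset.mem_univ σ) h
  rw [Finset.sum_congr rfl fun σ _ => hdiag σ]
  rw [← Equiv.sum_comp (Equiv.Perm.decomposeFin.symm)
    (fun σ : Equiv.Perm (Fin (n+1)) => (qp ((σ 0 : Fin (n+1)) : ℕ)).eval u *
      (qp ((σ 0 : Fin (n+1)) : ℕ)).eval v *
      ((∏ j : Fin (n+1), hval (j:ℕ)) / hval ((σ 0 : Fin (n+1)) : ℕ)))]
  rw [Fintype.sum_prod_type]
  have hinner : ∀ p : Fin (n+1), ∀ e : Equiv.Perm (Fin n),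
      (Equiv.Perm.decomposeFin.symm (p, e)) 0 = p := fun p e =>
    Equiv.Perm.decomposeFin_symm_apply_zero p e
  rw [Finset.sum_congr rfl fun p _ => Finset.sum_congr rfl fun e _ => by rw [hinner p e]]
  simp_rw [Finset.sum_const, Finset.card_univ, Fintype.card_perm, Fintype.card_fin, nsmul_eq_mul,
    Finset.mul_sum]

end aux
section aux2
open Polynomial Complex Finset


lemma iteratedDeriv_gauss (j : ℕ) : iteratedDeriv j (fun w : ℂ => Complex.exp (-w^2)) =
    fun z => ((-1:ℂ)^j * (hp j).eval z) * Complex.exp (-z^2) := by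
  induction j with
  | zero => funext z; simp [hp_zero]
  | succ j ih =>
    rw [iteratedDeriv_succ, ih]
    funext z
    have h2 : HasDerivAt (fun z : ℂ => -z^2) (-(2*z)) z := by
      exact ((hasDerivAt_pow 2 z).neg).congr_deriv (by norm_num)
    have hd : HasDerivAt (fun z : ℂ => ((-1:ℂ)^j * (hp j).eval z) * Complex.exp (-z^2))
        (((-1:ℂ)^j * (derivative (hp j)).eval z) * Complex.exp (-z^2)
          + ((-1:ℂ)^j * (hp j).eval z) * (Complex.exp (-z^2) * (-(2*z)))) z :=
      (((hp j).hasDerivAt z).const_mul ((-1:ℂ)^j)).mul h2.cexp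
    rw [hd.deriv, hp_succ]
    simp only [eval_sub, eval_mul, eval_X, eval_ofNat, pow_succ]
    ring

lemma physHermite_eq_hp (j : ℕ) (z : ℂ) : physHermite j z = (hp j).eval z := by
  rw [physHermite, iteratedDeriv_gauss]
  have h1 : (-1:ℂ)^j * (-1:ℂ)^j = 1 := by
    rw [← pow_add]
    exact Even.neg_one_pow ⟨j, rfl⟩
  have h2 : Complex.exp (z^2) * Complex.exp (-z^2) = 1 := by
    rw [← Complex.exp_add, show z^2 + -z^2 = 0 from by ring, Complex.exp_zero]
  calc (-1:ℂ)^j * Complex.exp (z^2) * (((-1:ℂ)^j * (hp j).eval z) * Complex.exp (-z^2))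
      = ((-1:ℂ)^j * (-1:ℂ)^j) * ((Complex.exp (z^2) * Complex.exp (-z^2)) * (hp j).eval z) := by
        ring
    _ = (hp j).eval z := by rw [h1, h2]; ring

lemma qcoef (k : ℕ) : (((2*sC)^k)⁻¹) * (((2*sC)^k)⁻¹) / hval k
    = ((2:ℂ)^k * (k.factorial:ℂ) * ((Sc:ℝ):ℂ))⁻¹ := by
  rw [hval]
  have ha : ((2*sC)^k)⁻¹ ≠ 0 := inv_ne_zero (pow_ne_zero _ twosC_ne)
  have hb : (2:ℂ)^k * (k.factorial:ℂ) * ((Sc:ℝ):ℂ) ≠ 0 := by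
    refine mul_ne_zero (mul_ne_zero (pow_ne_zero _ two_ne_zero) ?_) ?_
    · exact_mod_cast Nat.factorial_ne_zero k
    · exact_mod_cast ne_of_gt Sc_pos
  field_simp
  rw [mul_assoc, div_mul_eq_div_div, div_self (pow_ne_zero _ twosC_ne)]

lemma sqrt_fact : ((Sc:ℝ):ℂ) * ((Real.sqrt 2 : ℝ):ℂ) = ((Real.sqrt Real.pi : ℝ):ℂ) := by
  rw [← Complex.ofReal_mul]
  congr 1
  rw [Sc, ← Real.sqrt_mul (by positivity), div_mul_cancel₀]
  norm_num

/-- Gaussian multiple-integral identity (Lemma 4.1 (II), case `ρ = β = 0`):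
`r Θ⁺_{r-1}(u,v) = 2π√2 e^{-u²-v²} K_r(-i√2 u, -i√2 v) Θ_r(0,0)`,
all integrals converging absolutely. -/
theorem theta_ratio_gueKernel (r : ℕ) (hr : 1 ≤ r) (c : ℝ) (hc : 0 < c) (u v : ℂ) :
    Integrable (fun t : Fin r → ℝ =>
      (∏ α : Fin r, Complex.exp (2 * ((c : ℂ) + Complex.I * (t α : ℂ)) ^ 2)) *
        (vdm r fun α => (c : ℂ) + Complex.I * (t α : ℂ)) ^ 2) ∧
    Integrable (fun t : Fin (r - 1) → ℝ =>
      (∏ α : Fin (r - 1), Complex.exp (2 * ((c : ℂ) + Complex.I * (t α : ℂ)) ^ 2) *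
          (u - ((c : ℂ) + Complex.I * (t α : ℂ))) * (v - ((c : ℂ) + Complex.I * (t α : ℂ)))) *
        (vdm (r - 1) fun α => (c : ℂ) + Complex.I * (t α : ℂ)) ^ 2) ∧
    (r : ℂ) * thetaPlus (r - 1) c u v
      = 2 * (Real.pi : ℂ) * (Real.sqrt 2 : ℂ) * Complex.exp (-u ^ 2 - v ^ 2) *
          gueKernel r (-Complex.I * (Real.sqrt 2 : ℂ) * u) (-Complex.I * (Real.sqrt 2 : ℂ) * v) *
          theta00 r c := by
  obtain ⟨m, rfl⟩ : ∃ m, r = m + 1 := ⟨r - 1, (Nat.succ_pred_eq_of_pos hr).symm⟩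
  simp only [Nat.add_sub_cancel]
  refine ⟨theta_integrable c (m+1), plus_integrable c m u v, ?_⟩
  rw [thetaPlus, theta00, plus_integral c m u v, theta_integral c (m+1), gueKernel]
  have hxu : -Complex.I * ((Real.sqrt 2 : ℝ):ℂ) * u = sC * u := by rw [sC]; ring
  have hxv : -Complex.I * ((Real.sqrt 2 : ℝ):ℂ) * v = sC * v := by rw [sC]; ring
  simp only [physHermite_eq_hp, hxu, hxv]
  set Pi1 : ℂ := ∏ j : Fin (m+1), hval (j:ℕ) with hPi1
  set T : ℂ := ∑ j ∈ Finset.range (m+1),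
    (hp j).eval (sC*u) * (hp j).eval (sC*v) / ((2:ℂ)^j * (j.factorial:ℂ)) with hT
  have hsum1 : (∑ k : Fin (m+1), (qp (k:ℕ)).eval u * (qp (k:ℕ)).eval v *
      (Pi1 / hval (k:ℕ))) = (Pi1 / ((Sc:ℝ):ℂ)) * T := by
    rw [hT, Finset.mul_sum,
      Fin.sum_univ_eq_sum_range (fun k => (qp k).eval u * (qp k).eval v * (Pi1 / hval k)) (m+1)]
    refine Finset.sum_congr rfl fun k _ => ?_
    rw [qp_eval, qp_eval]
    calc ((2*sC)^k)⁻¹ * (hp k).eval (sC*u) * (((2*sC)^k)⁻¹ * (hp k).eval (sC*v)) * (Pi1 / hval k)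
        = (hp k).eval (sC*u) * (hp k).eval (sC*v) * Pi1 * (((2*sC)^k)⁻¹ * ((2*sC)^k)⁻¹ / hval k) := by
          ring
      _ = (hp k).eval (sC*u) * (hp k).eval (sC*v) * Pi1 * ((2:ℂ)^k * (k.factorial:ℂ) * ((Sc:ℝ):ℂ))⁻¹ := by
          rw [qcoef]
      _ = Pi1 / ((Sc:ℝ):ℂ) * ((hp k).eval (sC*u) * (hp k).eval (sC*v) / ((2:ℂ)^k * (k.factorial:ℂ))) := by
          simp only [div_eq_mul_inv, mul_inv]
          ring
  have hxy : Complex.exp (-((sC*u)^2 + (sC*v)^2)/2) = Complex.exp (u^2 + v^2) := by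
    congr 1
    rw [mul_pow, mul_pow, sC_sq]
    ring
  have hsum2 : (∑ j ∈ Finset.range (m+1), (hp j).eval (sC*u) * (hp j).eval (sC*v) *
      Complex.exp (-((sC*u)^2 + (sC*v)^2)/2) / ((2:ℂ)^j * (j.factorial:ℂ)))
      = Complex.exp (u^2 + v^2) * T := by
    rw [hT, Finset.mul_sum]
    refine Finset.sum_congr rfl fun j _ => ?_
    rw [hxy]
    ring
  rw [hsum1, hsum2]
  have hexp : Complex.exp (-u^2 - v^2) * Complex.exp (u^2 + v^2) = 1 := by
    rw [← Complex.exp_add, show -u^2 - v^2 + (u^2+v^2) = 0 from by ring, Complex.exp_zero]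
  have hfac : ((m+1:ℕ):ℂ) * ((m.factorial:ℕ):ℂ) = (((m+1).factorial:ℕ):ℂ) := by
    rw [Nat.factorial_succ]
    push_cast
    ring
  have hScne : ((Sc:ℝ):ℂ) ≠ 0 := by exact_mod_cast ne_of_gt Sc_pos
  have hpine : ((Real.sqrt Real.pi:ℝ):ℂ) ≠ 0 := by
    exact_mod_cast ne_of_gt (Real.sqrt_pos.mpr Real.pi_pos)
  have h2pine : ((2:ℂ) * (Real.pi:ℂ)) ≠ 0 := by
    refine mul_ne_zero two_ne_zero ?_
    exact_mod_cast Real.pi_ne_zero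
  -- final scalar identity
  calc ((m+1:ℕ):ℂ) * ((1/(2*(Real.pi:ℂ)))^m * (((m.factorial:ℕ):ℂ) * (Pi1/((Sc:ℝ):ℂ) * T)))
      = (((m+1).factorial:ℕ):ℂ) * (1/(2*(Real.pi:ℂ)))^m * Pi1 * T / ((Sc:ℝ):ℂ) := by
        rw [← hfac]; ring
    _ = 2*(Real.pi:ℂ)*((Real.sqrt 2:ℝ):ℂ) * Complex.exp (-u^2-v^2) *
        (1/((Real.sqrt Real.pi:ℝ):ℂ) * (Complex.exp (u^2+v^2) * T)) *
        ((1/(2*(Real.pi:ℂ)))^(m+1) * ((((m+1).factorial:ℕ):ℂ) * Pi1)) := by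
        rw [pow_succ (1/(2*(Real.pi:ℂ))) m]
        rw [show 2*(Real.pi:ℂ)*((Real.sqrt 2:ℝ):ℂ) * Complex.exp (-u^2-v^2) *
            (1/((Real.sqrt Real.pi:ℝ):ℂ) * (Complex.exp (u^2+v^2) * T)) *
            ((1/(2*(Real.pi:ℂ)))^m * (1/(2*(Real.pi:ℂ))) * ((((m+1).factorial:ℕ):ℂ) * Pi1))
          = (Complex.exp (-u^2-v^2) * Complex.exp (u^2+v^2)) *
            (2*(Real.pi:ℂ) * (1/(2*(Real.pi:ℂ)))) *
            (((Real.sqrt 2:ℝ):ℂ) / ((Real.sqrt Real.pi:ℝ):ℂ)) *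
            ((((m+1).factorial:ℕ):ℂ) * (1/(2*(Real.pi:ℂ)))^m * Pi1 * T) from by ring]
        rw [hexp, mul_one_div, div_self h2pine]
        rw [show ((Real.sqrt 2:ℝ):ℂ) / ((Real.sqrt Real.pi:ℝ):ℂ) = 1/((Sc:ℝ):ℂ) from by
          have h2ne : ((Real.sqrt 2:ℝ):ℂ) ≠ 0 := by
            exact_mod_cast ne_of_gt (Real.sqrt_pos.mpr two_pos)
          rw [← sqrt_fact, div_eq_div_iff (mul_ne_zero hScne h2ne) hScne]
          ring]
        ring
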